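/- Let T be a rooted weighted tree, u a vertex with parent edge e_u, ξ ≥ 0, k ≥ 1, l ≥ 0. Suppose Γ_ξ(u,k,l) ≤ ξ·ω(T_u) − c(e_u), where Γ_ξ(u,k,l) is the minimum of γ_ξ(A) = Σ_{e ∈ ∂A_1 \ {e_u}} (ξ·ω(T_e)+c(e)) over connected k-subpartitions A = {A_1,…,A_k} of V(T_u) with u ∈ A_1, residue ≤ l, and φ_T(A_i) ≤ ξ for all i ≥ 2. Then μ_ξ(u,k,l) = 1. -/

import Mathlib

open scoped Classical

noncomputable section

/-- A finite rooted weighted tree, encoded by a parent function. The root has an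
auxiliary parent edge `e_root` of weight `0` (`parent root = root`). Edges are
identified with their lower endpoints: the parent edge `e_v` of a vertex `v`
has weight `c v`. -/
structure RTree (V : Type) [Fintype V] [DecidableEq V] where
  root : V
  parent : V → V
  w : V → ℚ
  c : V → ℚ
  parent_root : parent root = root
  reaches_root : ∀ v : V, ∃ n : ℕ, parent^[n] v = root
  w_pos : ∀ v : V, 0 < w v
  c_pos : ∀ v : V, v ≠ root → 0 < c v
  c_root : c root = 0

namespace RTree

variable {V : Type} [Fintype V] [DecidableEq V] (T : RTree V)

/-- `v` lies in the subtree rooted at `u` (equivalently, edge `e_v ≤ e_u` in the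
natural partial order induced by the root). -/
def below (u v : V) : Prop := ∃ n : ℕ, T.parent^[n] v = u

/-- The vertex set of the subtree `T_u` (also of `T_{e_u}`). -/
def desc (u : V) : Finset V := Finset.univ.filter (fun v => T.below u v)

/-- Total vertex weight `ω(A)`. -/
def wsum (A : Finset V) : ℚ := ∑ v ∈ A, T.w v

/-- The (lower endpoints of) edges with exactly one endpoint in `A`, relative to a
ground set `W` of edges/vertices (`W = univ` gives the whole tree `T`). -/
def boundaryW (W A : Finset V) : Finset V :=
  W.filter (fun v => Xor' (v ∈ A) (T.parent v ∈ A))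

/-- The edge boundary `∂A` in the whole tree. -/
def boundary (A : Finset V) : Finset V := T.boundaryW Finset.univ A

/-- `c(∂A)` relative to ground set `W`. -/
def cutW (W A : Finset V) : ℚ := ∑ v ∈ T.boundaryW W A, T.c v

/-- `c(∂A)` in the whole tree. -/
def cut (A : Finset V) : ℚ := T.cutW Finset.univ A

/-- Vertex set of the subtree `T_u` relative to the ground set `W`. -/
def descW (W : Finset V) (u : V) : Finset V := T.desc u ∩ W

/-- `ε_ξ(e_v) = ξ·ω(T_{e_v}) + c(e_v)`. -/
def eps (ξ : ℚ) (v : V) : ℚ := ξ * T.wsum (T.desc v) + T.c v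

/-- `A` induces a connected subgraph (a subtree) of the tree: some `a ∈ A` is
reachable from every `v ∈ A` by a parent-chain staying inside `A`. -/
def connectedIn (A : Finset V) : Prop :=
  ∃ a ∈ A, ∀ v ∈ A, ∃ n : ℕ, T.parent^[n] v = a ∧ ∀ m : ℕ, m ≤ n → T.parent^[m] v ∈ A

/-- The children of a vertex. -/
def children (u : V) : Finset V :=
  Finset.univ.filter (fun v => T.parent v = u ∧ v ≠ u)

/-- `A` witnesses `μ_ξ(u,k,l) = 1` relative to ground set `W`: a connected
`k`-subpartition of `T_u` whose parts all have conductance at most `ξ`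
(boundaries computed in the ground set), with at most `l` residue vertices. -/
def muWitnessW (W : Finset V) (ξ : ℚ) (u : V) {k : ℕ} (A : Fin k → Finset V) (l : ℕ) : Prop :=
  (∀ i, (A i).Nonempty) ∧ (∀ i j, i ≠ j → Disjoint (A i) (A j)) ∧
  (∀ i, A i ⊆ T.descW W u) ∧ (∀ i, T.connectedIn (A i)) ∧
  (∀ i, T.cutW W (A i) / T.wsum (A i) ≤ ξ) ∧
  ((T.descW W u \ Finset.univ.biUnion A).card ≤ l)

/-- `μ_ξ(u,k,l) = 1` relative to ground set `W`. -/
def muW (W : Finset V) (ξ : ℚ) (u : V) (k l : ℕ) : Prop :=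
  ∃ A : Fin k → Finset V, T.muWitnessW W ξ u A l

/-- `A` witnesses `μ_ξ(u,k,l) = 1` (in the whole tree `T`). -/
def muWitness (ξ : ℚ) (u : V) {k : ℕ} (A : Fin k → Finset V) (l : ℕ) : Prop :=
  T.muWitnessW Finset.univ ξ u A l

/-- `μ_ξ(u,k,l) = 1`. -/
def mu (ξ : ℚ) (u : V) (k l : ℕ) : Prop := T.muW Finset.univ ξ u k l

/-- Membership in `𝒞_ξ(u,k,l)` relative to ground set `W`: a connected
`k`-subpartition of `T_u` with `u ∈ A₁`, residue at most `l`, and conductance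
at most `ξ` for every part other than `A₁`. -/
def inCW (W : Finset V) (ξ : ℚ) (u : V) {k : ℕ} (A : Fin k → Finset V) (l : ℕ) : Prop :=
  (∀ i, (A i).Nonempty) ∧ (∀ i j, i ≠ j → Disjoint (A i) (A j)) ∧
  (∀ i, A i ⊆ T.descW W u) ∧ (∀ i, T.connectedIn (A i)) ∧
  (∀ h : 0 < k, u ∈ A ⟨0, h⟩) ∧
  (∀ i : Fin k, i.val ≠ 0 → T.cutW W (A i) / T.wsum (A i) ≤ ξ) ∧
  ((T.descW W u \ Finset.univ.biUnion A).card ≤ l)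

/-- Membership in `𝒞_ξ(u,k,l)`. -/
def inC (ξ : ℚ) (u : V) {k : ℕ} (A : Fin k → Finset V) (l : ℕ) : Prop :=
  T.inCW Finset.univ ξ u A l

/-- `γ_ξ(𝒜) = Σ_{e ∈ ∂A₁ \ {e_u}} ε_ξ(e)` relative to ground set `W`. -/
def gammaValW (W : Finset V) (ξ : ℚ) (u : V) (A1 : Finset V) : ℚ :=
  ∑ v ∈ (T.boundaryW W A1).erase u, (ξ * T.wsum (T.descW W v) + T.c v)

/-- `γ_ξ(𝒜) = Σ_{e ∈ ∂A₁ \ {e_u}} ε_ξ(e)`. -/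
def gammaVal (ξ : ℚ) (u : V) (A1 : Finset V) : ℚ := T.gammaValW Finset.univ ξ u A1

/-- `Γ_ξ(u,k,l) = min over 𝒞_ξ(u,k,l) of γ_ξ`, with value `+∞` (`⊤` of `EReal`)
when `𝒞_ξ(u,k,l)` is empty, relative to ground set `W`. -/
def GammaW (W : Finset V) (ξ : ℚ) (u : V) (k l : ℕ) : EReal :=
  sInf {x : EReal | ∃ (h : 0 < k) (A : Fin k → Finset V),
    T.inCW W ξ u A l ∧ x = ((T.gammaValW W ξ u (A ⟨0, h⟩) : ℝ) : EReal)}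

/-- `Γ_ξ(u,k,l)`. -/
def Gamma (ξ : ℚ) (u : V) (k l : ℕ) : EReal := T.GammaW Finset.univ ξ u k l

end RTree

/-!
Pick `A ∈ 𝒞_ξ(u,k,l)` attaining `Γ`; only `φ_T(A₁) ≤ ξ` is missing for `A` to witness
`μ_ξ(u,k,l) = 1`. Every vertex of `T_u \ A₁` lies below some edge of `∂A₁ \ {e_u}`, so
`ω(T_u) − ω(A₁) ≤ Σ ω(T_e)`, while `c(∂A₁) ≤ c(e_u) + Σ c(e)`. Multiplying the first
inequality by `ξ ≥ 0` and adding the second turns `γ(A) ≤ ξ·ω(T_u) − c(e_u)` into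
`c(∂A₁) ≤ ξ·ω(A₁)`.
-/

namespace RTree

variable {V : Type} [Fintype V] [DecidableEq V] (T : RTree V)

lemma mem_desc {u v : V} : v ∈ T.desc u ↔ ∃ n, T.parent^[n] v = u := by
  rw [desc, Finset.mem_filter]
  simp [below]

lemma mem_boundary_of_notMem_of_parent_mem {A : Finset V} {v : V} (hv : v ∉ A)
    (hpv : T.parent v ∈ A) : v ∈ T.boundary A :=
  Finset.mem_filter.2 ⟨Finset.mem_univ v, Or.inr ⟨hpv, hv⟩⟩

/-- Walking up from a vertex of `T_u` outside `A` to `u ∈ A`, the last vertex outside `A`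
is the lower end of a boundary edge of `A`. -/
lemma desc_sdiff_subset_biUnion_boundary {u : V} {A : Finset V} (hu : u ∈ A) :
    T.desc u \ A ⊆ ((T.boundary A).erase u).biUnion T.desc := by
  intro x hx
  obtain ⟨hxu, hxA⟩ := Finset.mem_sdiff.1 hx
  have hreach : ∃ m, T.parent^[m] x ∈ A := by
    obtain ⟨n, hn⟩ := T.mem_desc.1 hxu
    exact ⟨n, hn ▸ hu⟩
  set m := Nat.find hreach
  have hm : 0 < m := Nat.pos_of_ne_zero fun h0 => hxA (by simpa [m, h0] using Nat.find_spec hreach)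
  set v := T.parent^[m - 1] x
  have hvA : v ∉ A := Nat.find_min hreach (Nat.sub_lt hm one_pos)
  have hpv : T.parent v ∈ A := by
    rw [← Function.iterate_succ_apply' T.parent, Nat.succ_eq_add_one, Nat.sub_add_cancel hm]
    exact Nat.find_spec hreach
  refine Finset.mem_biUnion.2 ⟨v, Finset.mem_erase.2 ⟨?_, ?_⟩, T.mem_desc.2 ⟨m - 1, rfl⟩⟩
  · rintro rfl
    exact hvA hu
  · exact T.mem_boundary_of_notMem_of_parent_mem hvA hpv

lemma wsum_pos {A : Finset V} (hA : A.Nonempty) : 0 < T.wsum A :=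
  Finset.sum_pos (fun v _ => T.w_pos v) hA

lemma wsum_union_le (A B : Finset V) : T.wsum (A ∪ B) ≤ T.wsum A + T.wsum B := by
  have h := Finset.sum_union_inter (s₁ := A) (s₂ := B) (f := T.w)
  have : 0 ≤ ∑ v ∈ A ∩ B, T.w v := Finset.sum_nonneg fun v _ => (T.w_pos v).le
  unfold wsum
  linarith

lemma wsum_biUnion_le (S : Finset V) (f : V → Finset V) :
    T.wsum (S.biUnion f) ≤ ∑ v ∈ S, T.wsum (f v) := by
  induction S using Finset.induction_on with
  | empty => simp [wsum]
  | insert a S haS ih =>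
    rw [Finset.biUnion_insert, Finset.sum_insert haS]
    linarith [T.wsum_union_le (f a) (S.biUnion f)]

lemma c_nonneg (v : V) : 0 ≤ T.c v := by
  rcases eq_or_ne v T.root with rfl | h
  · exact T.c_root.ge
  · exact (T.c_pos v h).le

lemma cut_le_c_add_sum_erase (u : V) (A : Finset V) :
    T.cut A ≤ T.c u + ∑ v ∈ (T.boundary A).erase u, T.c v :=
  calc T.cut A ≤ ∑ v ∈ insert u ((T.boundary A).erase u), T.c v :=
        Finset.sum_le_sum_of_subset_of_nonneg (Finset.insert_erase_subset u _)
          fun v _ _ => T.c_nonneg v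
    _ = T.c u + ∑ v ∈ (T.boundary A).erase u, T.c v :=
        Finset.sum_insert (Finset.notMem_erase _ _)

theorem cut_le_mul_wsum_of_gammaVal_le {ξ : ℚ} (hξ : 0 ≤ ξ) {u : V} {A : Finset V}
    (hA : A ⊆ T.desc u) (hu : u ∈ A)
    (hγ : T.gammaVal ξ u A ≤ ξ * T.wsum (T.desc u) - T.c u) :
    T.cut A ≤ ξ * T.wsum A := by
  set S := (T.boundary A).erase u
  have hγS : T.gammaVal ξ u A
      = ξ * ∑ v ∈ S, T.wsum (T.desc v) + ∑ v ∈ S, T.c v := by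
    simp only [gammaVal, gammaValW, descW, Finset.inter_univ, Finset.sum_add_distrib,
      Finset.mul_sum]
    rfl
  have hcover : T.wsum (T.desc u) - T.wsum A ≤ ∑ v ∈ S, T.wsum (T.desc v) :=
    calc T.wsum (T.desc u) - T.wsum A = T.wsum (T.desc u \ A) :=
          (Finset.sum_sdiff_eq_sub hA).symm
      _ ≤ T.wsum (S.biUnion T.desc) :=
          Finset.sum_le_sum_of_subset_of_nonneg (T.desc_sdiff_subset_biUnion_boundary hu)
            fun v _ _ => (T.w_pos v).le
      _ ≤ ∑ v ∈ S, T.wsum (T.desc v) := T.wsum_biUnion_le S T.desc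
  nlinarith [T.cut_le_c_add_sum_erase u A, mul_le_mul_of_nonneg_left hcover hξ]

/-- The infimum defining `Γ` is a minimum, since `γ` takes only finitely many values. -/
theorem exists_inC_gammaVal_le_of_Gamma_le {ξ : ℚ} {u : V} {k l : ℕ} {q : ℚ}
    (h : T.Gamma ξ u k l ≤ ((q : ℝ) : EReal)) :
    ∃ (hk : 0 < k) (A : Fin k → Finset V), T.inC ξ u A l ∧ T.gammaVal ξ u (A ⟨0, hk⟩) ≤ q := by
  set S := {x : EReal | ∃ (hk : 0 < k) (A : Fin k → Finset V),
    T.inCW Finset.univ ξ u A l ∧ x = ((T.gammaValW Finset.univ ξ u (A ⟨0, hk⟩) : ℝ) : EReal)}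
  have hS : S.Nonempty := by
    refine Set.nonempty_iff_ne_empty.2 fun hS => ?_
    change sInf S ≤ _ at h
    rw [hS, sInf_empty] at h
    exact (h.trans_lt (EReal.coe_lt_top _)).false
  have hSfin : S.Finite :=
    (Set.finite_range fun B : Finset V => ((T.gammaValW Finset.univ ξ u B : ℝ) : EReal)).subset
      fun _ ⟨_, A, _, hx⟩ => ⟨_, hx.symm⟩
  obtain ⟨hk, A, hA, hx⟩ := hS.csInf_mem hSfin
  refine ⟨hk, A, hA, ?_⟩
  have : ((T.gammaVal ξ u (A ⟨0, hk⟩) : ℝ) : EReal) ≤ ((q : ℝ) : EReal) := hx ▸ h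
  exact_mod_cast EReal.coe_le_coe_iff.1 this

end RTree

theorem stmt11_general {V : Type} [Fintype V] [DecidableEq V] (T : RTree V)
    (ξ : ℚ) (hξ : 0 ≤ ξ) (u : V) (k l : ℕ)
    (h : T.Gamma ξ u k l ≤ (((ξ * T.wsum (T.desc u) - T.c u : ℚ) : ℝ) : EReal)) :
    T.mu ξ u k l := by
  obtain ⟨hk, A, ⟨hne, hdisj, hsub, hconn, hu, hφ, hres⟩, hγ⟩ :=
    T.exists_inC_gammaVal_le_of_Gamma_le h
  refine ⟨A, hne, hdisj, hsub, hconn, fun i => ?_, hres⟩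
  rcases eq_or_ne i.val 0 with hi | hi
  · obtain rfl : i = ⟨0, hk⟩ := Fin.ext hi
    rw [div_le_iff₀ (T.wsum_pos (hne _))]
    exact T.cut_le_mul_wsum_of_gammaVal_le hξ
      (fun v hv => Finset.mem_of_mem_inter_left (hsub _ hv)) (hu hk) hγ
  · exact hφ i hi

/-- If `Γ_ξ(u,k,l) ≤ ξ·ω(T_u) − c(e_u)`, then `μ_ξ(u,k,l) = 1`. -/
theorem stmt11 {V : Type} [Fintype V] [DecidableEq V] (T : RTree V)
    (ξ : ℚ) (hξ : 0 ≤ ξ) (u : V) (k l : ℕ) (hk : 1 ≤ k)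
    (h : T.Gamma ξ u k l ≤ (((ξ * T.wsum (T.desc u) - T.c u : ℚ) : ℝ) : EReal)) :
    T.mu ξ u k l :=
  stmt11_general T ξ hξ u k l h
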